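/- arXiv:0806.0607 — 3 statements merged into one kernel-verified Lean document; each statement's English description precedes it below -/
import Mathlib

section
/- Let k ≥ 2 and let N = a₁ + ⋯ + a_k and N = b₁ + ⋯ + b_k be two decompositions of the same positive integer N into k positive integer summands. Then the multinomial coefficients ch(a₁,…,a_k) and ch(b₁,…,b_k) have a common divisor greater than 1. -/
/-!
Both multinomials are divisible by a binomial coefficient: `ch(a₁, …, a_k)` by `C(N, a₁)` and
`ch(b₁, …, b_k)` by `C(N, b₁)`, where `0 < a₁, b₁ < N` since `k ≥ 2`. Two such binomials
`C(N, i)` and `C(N, j)` with `0 < i ≤ j < N` are never coprime: from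
`C(N, j) C(j, i) = C(N, i) C(N - i, j - i)`, coprimality would give `C(N, i) ∣ C(j, i)`,
which is impossible since `0 < C(j, i) < C(N, i)`.
-/

open Finset

namespace Nat

theorem choose_lt_choose_of_lt_left {m n k : ℕ} (hk : 0 < k) (hkm : k ≤ m) (hmn : m < n) :
    m.choose k < n.choose k := by
  obtain ⟨k, rfl⟩ : ∃ k', k = k' + 1 := ⟨k - 1, by omega⟩
  have hsucc : m.choose (k + 1) < (m + 1).choose (k + 1) := by
    rw [choose_succ_succ']
    have := choose_pos (show k ≤ m by omega)
    omega
  exact hsucc.trans_le (choose_le_choose _ hmn)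

theorem one_lt_gcd_choose_choose {n i j : ℕ} (hi : 0 < i) (hin : i < n) (hj : 0 < j)
    (hjn : j < n) : 1 < gcd (n.choose i) (n.choose j) := by
  wlog hij : i ≤ j generalizing i j
  · rw [gcd_comm]
    exact this hj hjn hi hin (by omega)
  by_contra hgcd
  have hcop : Coprime (n.choose i) (n.choose j) := by
    have := gcd_pos_of_pos_left (n.choose j) (choose_pos hin.le)
    unfold Coprime
    omega
  have hdvd : n.choose i ∣ j.choose i :=
    hcop.dvd_of_dvd_mul_left ⟨_, choose_mul hij⟩
  exact (le_of_dvd (choose_pos hij) hdvd).not_gt (choose_lt_choose_of_lt_left hi hij hjn)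

theorem choose_sum_dvd_multinomial {α : Type*} {s : Finset α} {a : α} (ha : a ∈ s)
    (f : α → ℕ) : (∑ i ∈ s, f i).choose (f a) ∣ multinomial s f := by
  classical
  rw [← insert_erase ha, multinomial_insert (notMem_erase a s), sum_insert (notMem_erase a s)]
  exact dvd_mul_right _ _

end Nat

theorem stmt_10_general (k : ℕ) (hk : 2 ≤ k) (N : ℕ) (a b : Fin k → ℕ)
    (hapos : ∀ i, 0 < a i) (hbpos : ∀ i, 0 < b i)
    (hasum : ∑ i, a i = N) (hbsum : ∑ i, b i = N) :
    1 < Nat.gcd (Nat.multinomial Finset.univ a) (Nat.multinomial Finset.univ b) := by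
  obtain ⟨m, rfl⟩ : ∃ m, k = m + 2 := ⟨k - 2, by omega⟩
  have first_lt_sum : ∀ c : Fin (m + 2) → ℕ, (∀ i, 0 < c i) → c 0 < ∑ i, c i := fun c hc =>
    single_lt_sum Fin.zero_ne_one.symm (mem_univ 0) (mem_univ 1) (hc 1) fun _ _ _ => Nat.zero_le _
  have hchoose : 1 < Nat.gcd (N.choose (a 0)) (N.choose (b 0)) :=
    Nat.one_lt_gcd_choose_choose (hapos 0) (hasum ▸ first_lt_sum a hapos)
      (hbpos 0) (hbsum ▸ first_lt_sum b hbpos)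
  have hda : N.choose (a 0) ∣ Nat.multinomial univ a :=
    hasum ▸ Nat.choose_sum_dvd_multinomial (mem_univ 0) a
  have hdb : N.choose (b 0) ∣ Nat.multinomial univ b :=
    hbsum ▸ Nat.choose_sum_dvd_multinomial (mem_univ 0) b
  refine hchoose.trans_le (Nat.le_of_dvd (Nat.gcd_pos_of_pos_left _ (Nat.multinomial_pos _ _)) ?_)
  exact Nat.dvd_gcd ((Nat.gcd_dvd_left _ _).trans hda) ((Nat.gcd_dvd_right _ _).trans hdb)

theorem stmt_10 (k : ℕ) (hk : 2 ≤ k) (N : ℕ) (hN : 0 < N) (a b : Fin k → ℕ)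
    (hapos : ∀ i, 0 < a i) (hbpos : ∀ i, 0 < b i)
    (hasum : ∑ i, a i = N) (hbsum : ∑ i, b i = N) :
    1 < Nat.gcd (Nat.multinomial Finset.univ a) (Nat.multinomial Finset.univ b) :=
  stmt_10_general k hk N a b hapos hbpos hasum hbsum
end

section
/- Suppose a positive integer N ≥ 3 admits three decompositions N = m + i + j, N = a₁ + a₂ + a₃, N = b₁ + b₂ + b₃ into positive integer summands, such that for every prime p dividing N(N−1)(N−2), at least one of the three trinomial coefficients ch(m,i,j), ch(a₁,a₂,a₃), ch(b₁,b₂,b₃) is not divisible by p. Suppose moreover that gcd(i, j) = 1 and gcd(m, i+j−1) = 1. Then for every prime p dividing N(N−1), at least one of ch(a₁,a₂,a₃), ch(b₁,b₂,b₃) is not divisible by p (i.e., no relevant prime divides N or N−1); consequently C divides N−2, where C is the product over all relevant primes p of p^(v_p(N−2)+2v_p(N−1)+3v_p(N)). -/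
open Nat Finset

lemma carry_dvd_choose {p a b : ℕ} (hp : p.Prime) (h : p ≤ a % p + b % p) :
    p ∣ (a + b).choose a := by
  have hmul : emultiplicity p ((b + a).choose a) =
      #{i ∈ Ico 1 (Nat.log p (b + a) + 1) | p ^ i ≤ a % p ^ i + b % p ^ i} :=
    Nat.Prime.emultiplicity_choose' hp (lt_add_one _)
  have hone : (1 : ℕ) ∈ {i ∈ Ico 1 (Nat.log p (b + a) + 1) | p ^ i ≤ a % p ^ i + b % p ^ i} := by
    simp only [mem_filter, mem_Ico, pow_one]
    refine ⟨⟨le_refl 1, ?_⟩, h⟩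
    have hb : p ≤ b + a := by
      have := Nat.mod_le a p
      have := Nat.mod_le b p
      omega
    have := Nat.log_pos hp.one_lt hb
    omega
  have hcard : 1 ≤ #{i ∈ Ico 1 (Nat.log p (b + a) + 1) | p ^ i ≤ a % p ^ i + b % p ^ i} :=
    Finset.card_pos.mpr ⟨1, hone⟩
  have h1 : (1 : ℕ∞) ≤ emultiplicity p ((b + a).choose a) := by
    rw [hmul]; exact_mod_cast hcard
  have := pow_dvd_of_le_emultiplicity h1
  simpa [add_comm b a] using this

lemma multinomial_three (m i j : ℕ) :
    Nat.multinomial Finset.univ ![m, i, j] = (m + (i + j)).choose m * (i + j).choose i := by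
  have huniv : (Finset.univ : Finset (Fin 3)) = insert 0 (insert 1 {2}) := by decide
  rw [huniv, Nat.multinomial_insert (by decide), Nat.multinomial_insert (by decide),
    Nat.multinomial_singleton]
  simp

lemma key (N m i j : ℕ) (hm : 0 < m) (hi : 0 < i) (hj : 0 < j) (hmij : m + i + j = N)
    (hij : Nat.gcd i j = 1) (hm1 : Nat.gcd m (i + j - 1) = 1)
    (p : ℕ) (hp : p.Prime) (hpd : p ∣ N * (N - 1)) :
    p ∣ Nat.multinomial Finset.univ ![m, i, j] := by
  rw [multinomial_three]
  have hpos := hp.pos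
  have h2p := hp.two_le
  have hnotij : ¬ (p ∣ i ∧ p ∣ j) := by
    rintro ⟨h1, h2⟩
    have := Nat.dvd_gcd h1 h2
    rw [hij] at this
    exact Nat.Prime.one_lt hp |>.ne' (Nat.le_antisymm (Nat.le_of_dvd one_pos this) hpos)
  have hrm := Nat.mod_lt m hpos
  have hri := Nat.mod_lt i hpos
  have hrj := Nat.mod_lt j hpos
  rcases (Nat.Prime.dvd_mul hp).mp hpd with hpN | hpN1
  · -- p ∣ N
    by_cases hpij : p ∣ (i + j)
    · -- carry in i + j
      have h1 : i % p ≠ 0 := by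
        intro h
        have hpi : p ∣ i := Nat.dvd_of_mod_eq_zero h
        have hpj : p ∣ j := (Nat.dvd_add_right hpi).mp hpij
        exact hnotij ⟨hpi, hpj⟩
      have h2 : (i % p + j % p) % p = 0 := by
        rw [Nat.add_mod_mod, Nat.mod_add_mod]
        exact Nat.eq_zero_of_dvd_of_lt (Nat.dvd_sub hpij hpij) (by omega) ▸
          (Nat.mod_eq_zero_of_dvd hpij)
      have h3 : p ≤ i % p + j % p :=
        Nat.le_of_dvd (by omega) (Nat.dvd_of_mod_eq_zero h2)
      exact Dvd.dvd.mul_left (carry_dvd_choose hp h3) _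
    · -- carry in m + (i+j)
      have h1 : (i + j) % p ≠ 0 := fun h => hpij (Nat.dvd_of_mod_eq_zero h)
      have h2 : (m % p + (i + j) % p) % p = 0 := by
        rw [Nat.add_mod_mod, Nat.mod_add_mod]
        have : m + (i + j) = N := by omega
        rw [this]
        exact Nat.mod_eq_zero_of_dvd hpN
      have h3 : p ≤ m % p + (i + j) % p :=
        Nat.le_of_dvd (by omega) (Nat.dvd_of_mod_eq_zero h2)
      exact Dvd.dvd.mul_right (carry_dvd_choose hp h3) _
  · -- p ∣ N - 1
    have hN3 : 3 ≤ N := by omega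
    have hNmod : N % p = 1 := by
      obtain ⟨t, ht⟩ := hpN1
      have : N = p * t + 1 := by omega
      rw [this, Nat.mul_add_mod]
      exact Nat.mod_eq_of_lt (by omega)
    by_cases hc1 : p ≤ i % p + j % p
    · exact Dvd.dvd.mul_left (carry_dvd_choose hp hc1) _
    · push_neg at hc1
      have hijmod : (i + j) % p = i % p + j % p := by
        rw [Nat.add_mod, Nat.mod_eq_of_lt hc1]
      by_cases hc2 : p ≤ m % p + (i + j) % p
      · exact Dvd.dvd.mul_right (carry_dvd_choose hp hc2) _
      · exfalso
        push_neg at hc2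
        rw [hijmod] at hc2
        have hs : (m % p + (i % p + j % p)) % p = 1 := by
          have h := Nat.add_mod m (i + j) p
          rw [hijmod] at h
          rw [← h, ← Nat.add_assoc, hmij, hNmod]
        have hslt : m % p + (i % p + j % p) < p := by omega
        rw [Nat.mod_eq_of_lt hslt] at hs
        -- sum of remainders is exactly 1
        rcases Nat.eq_zero_or_pos (m % p) with hm0 | hm0
        · -- p ∣ m and i+j ≡ 1 mod p
          have hpm : p ∣ m := Nat.dvd_of_mod_eq_zero hm0
          have hij1 : (i + j) % p = 1 := by rw [hijmod]; omega
          have hpij1 : p ∣ (i + j - 1) := by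
            have := Nat.div_add_mod (i + j) p
            exact ⟨(i + j) / p, by omega⟩
          have := Nat.dvd_gcd hpm hpij1
          rw [hm1] at this
          exact Nat.Prime.one_lt hp |>.ne' (Nat.le_antisymm (Nat.le_of_dvd one_pos this) hpos)
        · -- m % p = 1, p ∣ i, p ∣ j
          have hi0 : i % p = 0 := by omega
          have hj0 : j % p = 0 := by omega
          exact hnotij ⟨Nat.dvd_of_mod_eq_zero hi0, Nat.dvd_of_mod_eq_zero hj0⟩

theorem stmt_16 (N m i j a₁ a₂ a₃ b₁ b₂ b₃ : ℕ) (hN : 3 ≤ N)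
    (hm : 0 < m) (hi : 0 < i) (hj : 0 < j) (hmij : m + i + j = N)
    (ha₁ : 0 < a₁) (ha₂ : 0 < a₂) (ha₃ : 0 < a₃) (hasum : a₁ + a₂ + a₃ = N)
    (hb₁ : 0 < b₁) (hb₂ : 0 < b₂) (hb₃ : 0 < b₃) (hbsum : b₁ + b₂ + b₃ = N)
    (hacc : ∀ p : ℕ, p.Prime → p ∣ N * (N - 1) * (N - 2) →
      ¬ p ∣ Nat.multinomial Finset.univ ![m, i, j] ∨
      ¬ p ∣ Nat.multinomial Finset.univ ![a₁, a₂, a₃] ∨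
      ¬ p ∣ Nat.multinomial Finset.univ ![b₁, b₂, b₃])
    (hij : Nat.gcd i j = 1) (hm1 : Nat.gcd m (i + j - 1) = 1)
    (C : ℕ)
    (hC : C = ∏ p ∈ (N * (N - 1) * (N - 2)).primeFactors.filter
      (fun p => p ∣ Nat.multinomial Finset.univ ![a₁, a₂, a₃] ∧
                p ∣ Nat.multinomial Finset.univ ![b₁, b₂, b₃]),
      p ^ ((N - 2).factorization p + 2 * (N - 1).factorization p + 3 * N.factorization p)) :
    (∀ p : ℕ, p.Prime → p ∣ N * (N - 1) →
      ¬ p ∣ Nat.multinomial Finset.univ ![a₁, a₂, a₃] ∨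
      ¬ p ∣ Nat.multinomial Finset.univ ![b₁, b₂, b₃]) ∧
    C ∣ N - 2 := by
  have hmain : ∀ p : ℕ, p.Prime → p ∣ N * (N - 1) →
      ¬ p ∣ Nat.multinomial Finset.univ ![a₁, a₂, a₃] ∨
      ¬ p ∣ Nat.multinomial Finset.univ ![b₁, b₂, b₃] := by
    intro p hp hpd
    have h3 : p ∣ N * (N - 1) * (N - 2) := Dvd.dvd.mul_right hpd _
    rcases hacc p hp h3 with h | h | h
    · exact absurd (key N m i j hm hi hj hmij hij hm1 p hp hpd) h
    · exact Or.inl h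
    · exact Or.inr h
  refine ⟨hmain, ?_⟩
  have hN2 : N - 2 ≠ 0 := by omega
  set S := (N * (N - 1) * (N - 2)).primeFactors.filter
      (fun p => p ∣ Nat.multinomial Finset.univ ![a₁, a₂, a₃] ∧
                p ∣ Nat.multinomial Finset.univ ![b₁, b₂, b₃]) with hS
  have hmem : ∀ p ∈ S, p.Prime ∧ p ∣ (N - 2) ∧ ¬ p ∣ N ∧ ¬ p ∣ (N - 1) := by
    intro p hpS
    rw [hS, Finset.mem_filter] at hpS
    obtain ⟨hpf, hda, hdb⟩ := hpS
    have hp := Nat.prime_of_mem_primeFactors hpf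
    have hdvd := Nat.dvd_of_mem_primeFactors hpf
    have hnot : ¬ p ∣ N * (N - 1) := by
      intro hcon
      rcases hmain p hp hcon with h | h
      · exact h hda
      · exact h hdb
    have hd2 : p ∣ N - 2 := by
      rcases (Nat.Prime.dvd_mul hp).mp hdvd with h | h
      · exact absurd h hnot
      · exact h
    exact ⟨hp, hd2, fun h => hnot (Dvd.dvd.mul_right h _),
      fun h => hnot (Dvd.dvd.mul_left h _)⟩
  have hCeq : C = ∏ p ∈ S, p ^ ((N - 2).factorization p) := by
    rw [hC]
    apply Finset.prod_congr rfl
    intro p hpS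
    obtain ⟨hp, hd2, hnN, hnN1⟩ := hmem p hpS
    rw [Nat.factorization_eq_zero_of_not_dvd hnN, Nat.factorization_eq_zero_of_not_dvd hnN1]
    ring_nf
  have hsub : S ⊆ (N - 2).primeFactors := by
    intro p hpS
    obtain ⟨hp, hd2, _, _⟩ := hmem p hpS
    exact Nat.mem_primeFactors.mpr ⟨hp, hd2, hN2⟩
  have hdvd2 : ∏ p ∈ S, p ^ ((N - 2).factorization p) ∣
      ∏ p ∈ (N - 2).primeFactors, p ^ ((N - 2).factorization p) :=
    Finset.prod_dvd_prod_of_subset S _ _ hsub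
  have hfin : ∏ p ∈ (N - 2).primeFactors, p ^ ((N - 2).factorization p) = N - 2 := by
    rw [← Nat.support_factorization]
    exact Nat.factorization_prod_pow_eq_self hN2
  rw [hCeq]
  exact hdvd2.trans hfin.dvd
end

section
/- Let p be a prime and N a positive integer whose base-p digit sum is at least 3. Let e₁ = v_p(N) and e₂ = v_p(N − p^{e₁}). Then: (a) N − p^{e₁} − p^{e₂} > 0 and the decomposition N = (N − p^{e₁} − p^{e₂}) + p^{e₂} + p^{e₁} into three positive integers is p-acceptable; and (b) every p-acceptable decomposition N = a + b + c into three positive integers satisfies a, b, c ≤ N − p^{e₁} − p^{e₂}. In other words, the p-threshold of N with respect to k = 3 is N − p^{e₁} − p^{e₂}. -/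
/-!
By Legendre's formula, `(p - 1) * v_p(ch(a₁, …, a_k)) + s(a₁ + ⋯ + a_k) = s(a₁) + ⋯ + s(a_k)`
for the base-`p` digit sum `s`, so a decomposition is `p`-acceptable iff the digit sums of the
summands add up to that of `N`, i.e. iff the addition has no carries (Kummer).

Subtracting `p ^ v_p(n)` from `n` lowers the digit sum by exactly one, so the proposed summands
have digit sums `s(N) - 2`, `1`, `1`; as `s(N) ≥ 3` the first summand is positive.

Conversely, if both additions `a + (b + c) = N` and `b + c` are carry-free, then `b + c` is `0`
modulo `p ^ e₁` and at most `N mod p ^ e₂ ≤ p ^ e₁` modulo `p ^ e₂`. Since `b, c > 0` add without carry, `b + c` is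
either a sum of two positive multiples of `p ^ e₂`, or `≡ p ^ e₁ (mod p ^ e₂)` and at least
`2 p ^ e₁`; either way `b + c ≥ p ^ e₁ + p ^ e₂`, i.e. `a ≤ N - p ^ e₁ - p ^ e₂`.
-/

open Finset

namespace Nat

variable {p : ℕ}

theorem sub_one_mul_factorization_factorial_add_sum_digits (hp : p.Prime) (n : ℕ) :
    (p - 1) * (n !).factorization p + (p.digits n).sum = n := by
  have := Fact.mk hp
  rw [factorization_def _ hp, sub_one_mul_padicValNat_factorial]
  exact Nat.sub_add_cancel (digit_sum_le p n)

theorem sub_one_mul_factorization_multinomial_add_sum_digits (hp : p.Prime) {ι : Type*}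
    (s : Finset ι) (f : ι → ℕ) :
    (p - 1) * (multinomial s f).factorization p + (p.digits (∑ i ∈ s, f i)).sum =
      ∑ i ∈ s, (p.digits (f i)).sum := by
  have hspec := congrArg (fun n => n.factorization p) (multinomial_spec s f)
  simp only [factorization_mul (prod_ne_zero_iff.2 fun i _ => (f i).factorial_ne_zero)
    (multinomial_pos s f).ne', factorization_prod fun i _ => (f i).factorial_ne_zero,
    Finsupp.add_apply, Finsupp.coe_finsetSum, Finset.sum_apply] at hspec
  have legendre := sub_one_mul_factorization_factorial_add_sum_digits hp
  have hsum := legendre (∑ i ∈ s, f i)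
  rw [← hspec] at hsum
  have hterms := sum_congr rfl fun i (_ : i ∈ s) => (legendre (f i)).symm
  rw [sum_add_distrib, ← mul_sum] at hterms
  linarith

theorem not_dvd_multinomial_iff (hp : p.Prime) {ι : Type*} (s : Finset ι) (f : ι → ℕ) :
    ¬ p ∣ multinomial s f ↔ ∑ i ∈ s, (p.digits (f i)).sum = (p.digits (∑ i ∈ s, f i)).sum := by
  have hp1 : p - 1 ≠ 0 := by have := hp.two_le; omega
  rw [← sub_one_mul_factorization_multinomial_add_sum_digits hp s f, add_eq_right, mul_eq_zero,
    or_iff_right hp1, factorization_eq_zero_iff]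
  simp [hp, (multinomial_pos s f).ne']

theorem multinomial_univ_two_eq_choose (x y : ℕ) :
    multinomial univ ![x, y] = (x + y).choose x := by
  rw [multinomial_univ_two, choose_eq_factorial_div_factorial (le_add_right x y),
    add_tsub_cancel_left]

theorem not_dvd_choose_iff (hp : p.Prime) (x y : ℕ) :
    ¬ p ∣ (x + y).choose x ↔ (p.digits x).sum + (p.digits y).sum = (p.digits (x + y)).sum := by
  simpa [multinomial_univ_two_eq_choose] using not_dvd_multinomial_iff hp univ ![x, y]

theorem sum_digits_add_le (hp : p.Prime) (x y : ℕ) :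
    (p.digits (x + y)).sum ≤ (p.digits x).sum + (p.digits y).sum := by
  have h := sub_one_mul_factorization_multinomial_add_sum_digits hp univ ![x, y]
  simp only [Fin.sum_univ_two, Matrix.cons_val_zero, Matrix.cons_val_one] at h
  omega

theorem mod_pow_add_mod_pow_of_not_dvd_choose (hp : p.Prime) {x y : ℕ}
    (h : ¬ p ∣ (x + y).choose x) (i : ℕ) : x % p ^ i + y % p ^ i = (x + y) % p ^ i := by
  have := Fact.mk hp
  have hv := padicValNat.eq_zero_of_not_dvd h
  rw [add_comm x y, padicValNat_choose' (b := i + log p (y + x) + 1) (by omega),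
    Finset.card_eq_zero, filter_eq_empty_iff] at hv
  rcases i.eq_zero_or_pos with rfl | hi
  · simp only [pow_zero, Nat.mod_one]
  · rw [Nat.add_mod x, Nat.mod_eq_of_lt (not_le.1 (hv (mem_Ico.2 ⟨hi, by omega⟩)))]

theorem sum_digits_base_pow_mul (hp : 1 < p) (k m : ℕ) :
    (p.digits (p ^ k * m)).sum = (p.digits m).sum := by
  rcases m.eq_zero_or_pos with rfl | hm
  · simp
  · simp [digits_base_pow_mul hp hm]

theorem sum_digits_pow (hp : 1 < p) (k : ℕ) : (p.digits (p ^ k)).sum = 1 := by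
  simpa [digits_of_lt p 1 one_ne_zero hp] using sum_digits_base_pow_mul hp k 1

theorem sum_digits_sub_one_add_one (hp : p.Prime) {m : ℕ} (hm : ¬ p ∣ m) :
    (p.digits (m - 1)).sum + 1 = (p.digits m).sum := by
  have hm0 : m ≠ 0 := by
    rintro rfl
    exact hm (dvd_zero p)
  have hm1 : 1 + (m - 1) = m := Nat.add_sub_cancel' (one_le_iff_ne_zero.2 hm0)
  have h := (not_dvd_choose_iff hp 1 (m - 1)).1 (by rwa [choose_one_right, hm1])
  rw [hm1] at h
  simpa [digits_of_lt p 1 one_ne_zero hp.one_lt, add_comm] using h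

theorem sum_digits_sub_pow_factorization_add_one (hp : p.Prime) {n : ℕ} (hn : n ≠ 0) :
    (p.digits (n - p ^ n.factorization p)).sum + 1 = (p.digits n).sum := by
  have hn' : p ^ n.factorization p * ordCompl[p] n = n := ordProj_mul_ordCompl_eq_self n p
  have hm := not_dvd_ordCompl hp hn
  generalize n / p ^ n.factorization p = m at hm hn'
  generalize n.factorization p = e at hm hn'
  subst hn'
  rw [← Nat.mul_sub_one, sum_digits_base_pow_mul hp.one_lt, sum_digits_base_pow_mul hp.one_lt,
    sum_digits_sub_one_add_one hp hm]

theorem add_le_of_mod_add_mod_eq {q Q b c : ℕ} (hqQ : q ∣ Q) (hb : 0 < b) (hc : 0 < c)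
    (hq : b % q + c % q = (b + c) % q) (hQ : b % Q + c % Q = (b + c) % Q)
    (hq0 : (b + c) % q = 0) (hQq : (b + c) % Q ≤ q) : q + Q ≤ b + c := by
  have hdvd : q ∣ (b + c) % Q := (Nat.dvd_mod_iff hqQ).2 (Nat.dvd_of_mod_eq_zero hq0)
  rcases Nat.eq_zero_or_pos ((b + c) % Q) with hr | hr
  · have hbQ : Q ∣ b := Nat.dvd_of_mod_eq_zero (by omega)
    have hcQ : Q ∣ c := Nat.dvd_of_mod_eq_zero (by omega)
    have := Nat.le_of_dvd hb hbQ
    have := Nat.le_of_dvd hc hcQ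
    have := Nat.le_of_dvd (Nat.pos_of_dvd_of_pos hbQ hb) hqQ
    omega
  · have hrq : (b + c) % Q = q := le_antisymm hQq (Nat.le_of_dvd hr hdvd)
    have hbq : q ≤ b := Nat.le_of_dvd hb (Nat.dvd_of_mod_eq_zero (by omega))
    have hcq : q ≤ c := Nat.le_of_dvd hc (Nat.dvd_of_mod_eq_zero (by omega))
    have hdiv := Nat.mod_add_div (b + c) Q
    have hquot : (b + c) / Q ≠ 0 := by
      intro h0
      rw [h0] at hdiv
      omega
    have := Nat.le_mul_of_pos_right Q (Nat.pos_of_ne_zero hquot)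
    omega

theorem pow_add_pow_le_of_sum_digits_eq (hp : p.Prime) {a b c N i j : ℕ} (hij : i ≤ j)
    (hb : 0 < b) (hc : 0 < c) (habc : a + b + c = N)
    (hs : (p.digits a).sum + (p.digits b).sum + (p.digits c).sum = (p.digits N).sum)
    (hNi : p ^ i ∣ N) (hNj : N % p ^ j ≤ p ^ i) : p ^ i + p ^ j ≤ b + c := by
  rw [add_assoc] at habc
  have hsub := sum_digits_add_le hp a (b + c)
  have hbc := sum_digits_add_le hp b c
  rw [habc] at hsub
  have carry_a := mod_pow_add_mod_pow_of_not_dvd_choose hp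
    ((not_dvd_choose_iff hp a (b + c)).2 (by rw [habc]; omega))
  have carry_bc := mod_pow_add_mod_pow_of_not_dvd_choose hp
    ((not_dvd_choose_iff hp b c).2 (by omega))
  have hi := carry_a i
  have hj := carry_a j
  rw [habc, Nat.mod_eq_zero_of_dvd hNi] at hi
  rw [habc] at hj
  exact add_le_of_mod_add_mod_eq (pow_dvd_pow p hij) hb hc (carry_bc i) (carry_bc j)
    (Nat.add_eq_zero_iff.1 hi).2 (le_add_self.trans (hj ▸ hNj))

end Nat

theorem stmt_17 (p : ℕ) (hp : p.Prime) (N : ℕ) (hN : 0 < N)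
    (hdig : 3 ≤ (p.digits N).sum)
    (e₁ e₂ : ℕ) (he₁ : e₁ = N.factorization p) (he₂ : e₂ = (N - p ^ e₁).factorization p) :
    (0 < N - p ^ e₁ - p ^ e₂ ∧
      ¬ p ∣ Nat.multinomial Finset.univ ![N - p ^ e₁ - p ^ e₂, p ^ e₂, p ^ e₁]) ∧
    (∀ a b c : ℕ, 0 < a → 0 < b → 0 < c → a + b + c = N →
      ¬ p ∣ Nat.multinomial Finset.univ ![a, b, c] →
      a ≤ N - p ^ e₁ - p ^ e₂ ∧ b ≤ N - p ^ e₁ - p ^ e₂ ∧ c ≤ N - p ^ e₁ - p ^ e₂) := by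
  set x := N - p ^ e₁
  have hs₁ : (p.digits x).sum + 1 = (p.digits N).sum := by
    simpa only [← he₁] using Nat.sum_digits_sub_pow_factorization_add_one hp hN.ne'
  have hx : x ≠ 0 := by
    rintro h
    simp [h] at hs₁
    omega
  have hs₂ : (p.digits (x - p ^ e₂)).sum + 1 = (p.digits x).sum := by
    simpa only [← he₂] using Nat.sum_digits_sub_pow_factorization_add_one hp hx
  have hT : x - p ^ e₂ ≠ 0 := by
    rintro h
    simp [h] at hs₂
    omega
  have hN₁ : p ^ e₁ ∣ N := he₁ ▸ Nat.ordProj_dvd N p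
  have hx₂ : p ^ e₂ ∣ x := he₂ ▸ Nat.ordProj_dvd x p
  have h₁₂ : e₁ ≤ e₂ := he₂ ▸ (hp.pow_dvd_iff_le_factorization hx).1 (Nat.dvd_sub hN₁ dvd_rfl)
  have hN₂ : N % p ^ e₂ ≤ p ^ e₁ :=
    (Nat.modEq_iff_dvd' (Nat.le_of_dvd hN hN₁)).2 hx₂ ▸ Nat.mod_le _ _
  refine ⟨⟨Nat.pos_of_ne_zero hT, ?_⟩, fun a b c ha hb hc habc hacc => ?_⟩
  · rw [Nat.not_dvd_multinomial_iff hp, Fin.sum_univ_three, Fin.sum_univ_three]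
    simp only [Matrix.cons_val_zero, Matrix.cons_val_one, Matrix.cons_val_two, Matrix.tail_cons,
      Matrix.head_cons, Nat.sum_digits_pow hp.one_lt]
    rw [show x - p ^ e₂ + p ^ e₂ + p ^ e₁ = N by omega]
    omega
  · rw [Nat.not_dvd_multinomial_iff hp, Fin.sum_univ_three, Fin.sum_univ_three] at hacc
    simp only [Matrix.cons_val_zero, Matrix.cons_val_one, Matrix.cons_val_two, Matrix.tail_cons,
      Matrix.head_cons, habc] at hacc
    have ha' := Nat.pow_add_pow_le_of_sum_digits_eq hp h₁₂ hb hc habc hacc hN₁ hN₂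
    have hb' := Nat.pow_add_pow_le_of_sum_digits_eq (a := b) hp h₁₂ ha hc (by omega) (by omega)
      hN₁ hN₂
    have hc' := Nat.pow_add_pow_le_of_sum_digits_eq (a := c) hp h₁₂ ha hb (by omega) (by omega)
      hN₁ hN₂
    omega
end
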